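/- Let x, y, z be positive real numbers with y ≠ x + z, let φ₁ ∈ (0, π), and let k₁, a₀, a₂ be real numbers. Assume that P_H(z) · R(2k₁/sin(φ₁)) · P_H(x) · R(a₀) · P_H(y) · R(a₂) = I (the 2×2 identity matrix) and that cosh(y) = cosh(x)·cosh(z) + sinh(x)·sinh(z)·cos(2φ₁). Then, setting L = x + y + z, one has k₁ = sin³(φ₁) · cosh(L/2) / sinh(L/2). -/

import Mathlib

/-!
Moving `P_H y * R a₂` to the other side (`R a⁻¹ = R (-a)`, `P_H τ⁻¹ = P_H (-τ)`), the `(0, 1)`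
entry of the matrix identity reads `sinh (x + z) - (2 k₁ / sin φ₁) sinh x sinh z = sinh y`,
while the law of cosines with `cos 2φ₁ = 1 - 2 sin² φ₁` reads
`cosh (x + z) - cosh y = 2 sin² φ₁ sinh x sinh z`. Eliminating `sinh x sinh z` gives
`k₁ (cosh (x + z) - cosh y) = sin³ φ₁ (sinh (x + z) - sinh y)`, and by the sum-to-product
formulas both differences are multiples of `sinh ((x + z - y) / 2) ≠ 0`, leaving
`k₁ sinh (L / 2) = sin³ φ₁ cosh (L / 2)`.
-/

/-- The billiard reflection matrix acting on Jacobi fields. -/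
noncomputable def R (a : ℝ) : Matrix (Fin 2) (Fin 2) ℝ := !![-1, 0; a, -1]

/-- The Jacobi-field evolution matrix along a geodesic of length `τ` on the
hyperbolic plane of curvature `-1`. -/
noncomputable def P_H (τ : ℝ) : Matrix (Fin 2) (Fin 2) ℝ :=
  !![Real.cosh τ, Real.sinh τ; Real.sinh τ, Real.cosh τ]

open Real Matrix

lemma R_mul_R_neg (a : ℝ) : R a * R (-a) = 1 := by
  rw [R, R, mul_fin_two, one_fin_two]; norm_num

lemma P_H_mul_P_H (s t : ℝ) : P_H s * P_H t = P_H (s + t) := by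
  rw [P_H, P_H, P_H, mul_fin_two, cosh_add, sinh_add]
  congr 1; ring_nf

lemma P_H_mul_P_H_neg (τ : ℝ) : P_H τ * P_H (-τ) = 1 := by
  rw [P_H_mul_P_H, add_neg_cancel, P_H, cosh_zero, sinh_zero, one_fin_two]

lemma P_H_mul_R_mul_P_H_apply_zero_one (z b x : ℝ) :
    (P_H z * R b * P_H x) 0 1 = b * sinh z * sinh x - sinh (z + x) := by
  rw [P_H, R, P_H, mul_fin_two, mul_fin_two, sinh_add]
  simp only [of_apply, cons_val', cons_val_zero, cons_val_one, empty_val', cons_val_fin_one]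
  ring

lemma sinh_add_sub_eq_sinh_of_mul_eq_one {x y z b a₀ a₂ : ℝ}
    (h : P_H z * R b * P_H x * R a₀ * P_H y * R a₂ = 1) :
    sinh (z + x) - b * sinh z * sinh x = sinh y := by
  have hinv : P_H z * R b * P_H x * R a₀ = R (-a₂) * P_H (-y) := by
    calc P_H z * R b * P_H x * R a₀
        = P_H z * R b * P_H x * R a₀ * P_H y * (R a₂ * R (-a₂)) * P_H (-y) := by
          rw [R_mul_R_neg, Matrix.mul_one, Matrix.mul_assoc _ (P_H y), P_H_mul_P_H_neg,
            Matrix.mul_one]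
      _ = R (-a₂) * P_H (-y) := by simp only [← Matrix.mul_assoc, h, Matrix.one_mul]
  have h01 := congrFun (congrFun hinv 0) 1
  rw [Matrix.mul_apply, Fin.sum_univ_two, P_H_mul_R_mul_P_H_apply_zero_one] at h01
  simp only [R, P_H, of_apply, cons_val', cons_val_zero, cons_val_one, empty_val',
    cons_val_fin_one, mul_apply, Fin.sum_univ_two, sinh_neg] at h01
  linarith

lemma cosh_sub_cosh (a b : ℝ) :
    cosh a - cosh b = 2 * sinh ((a + b) / 2) * sinh ((a - b) / 2) := by
  calc cosh a - cosh b
      = cosh ((a + b) / 2 + (a - b) / 2) - cosh ((a + b) / 2 - (a - b) / 2) := by ring_nf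
    _ = 2 * sinh ((a + b) / 2) * sinh ((a - b) / 2) := by rw [cosh_add, cosh_sub]; ring

lemma sinh_sub_sinh (a b : ℝ) :
    sinh a - sinh b = 2 * cosh ((a + b) / 2) * sinh ((a - b) / 2) := by
  calc sinh a - sinh b
      = sinh ((a + b) / 2 + (a - b) / 2) - sinh ((a + b) / 2 - (a - b) / 2) := by ring_nf
    _ = 2 * cosh ((a + b) / 2) * sinh ((a - b) / 2) := by rw [sinh_add, sinh_sub]; ring

lemma mul_cosh_sub_cosh_eq {x y z φ k : ℝ} (hs : sin φ ≠ 0)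
    (hsinh : sinh (z + x) - 2 * k / sin φ * sinh z * sinh x = sinh y)
    (hcos : cosh y = cosh x * cosh z + sinh x * sinh z * cos (2 * φ)) :
    k * (cosh (x + z) - cosh y) = sin φ ^ 3 * (sinh (x + z) - sinh y) := by
  rw [cos_two_mul, cos_sq'] at hcos
  rw [hcos, ← hsinh, cosh_add, add_comm z x]
  field_simp
  ring

theorem stmt_8_general (x y z φ₁ k₁ a₀ a₂ : ℝ)
    (hne : y ≠ x + z) (hφ : φ₁ ∈ Set.Ioo 0 Real.pi)
    (hmat : P_H z * R (2 * k₁ / Real.sin φ₁) * P_H x * R a₀ * P_H y * R a₂ = 1)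
    (hcos : Real.cosh y =
      Real.cosh x * Real.cosh z + Real.sinh x * Real.sinh z * Real.cos (2 * φ₁))
    (L : ℝ) (hL : L = x + y + z) :
    k₁ = Real.sin φ₁ ^ 3 * Real.cosh (L / 2) / Real.sinh (L / 2) := by
  have hs : 0 < sin φ₁ := sin_pos_of_pos_of_lt_pi hφ.1 hφ.2
  have key := mul_cosh_sub_cosh_eq hs.ne' (sinh_add_sub_eq_sinh_of_mul_eq_one hmat) hcos
  rw [cosh_sub_cosh, sinh_sub_sinh, show (x + z + y) / 2 = L / 2 by rw [hL]; ring] at key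
  have hB : sinh ((x + z - y) / 2) ≠ 0 := by
    rw [Ne, sinh_eq_zero]; intro h; exact hne (by linarith)
  have hk : k₁ * sinh (L / 2) = sin φ₁ ^ 3 * cosh (L / 2) := by
    apply mul_right_cancel₀ hB; linear_combination key / 2
  have hA : sinh (L / 2) ≠ 0 := by
    intro h
    rw [h, mul_zero] at hk
    exact (mul_pos (pow_pos hs 3) (cosh_pos _)).ne' hk.symm
  rw [eq_div_iff hA, hk]

theorem stmt_8 (x y z φ₁ k₁ a₀ a₂ : ℝ) (hx : 0 < x) (hy : 0 < y) (hz : 0 < z)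
    (hne : y ≠ x + z) (hφ : φ₁ ∈ Set.Ioo 0 Real.pi)
    (hmat : P_H z * R (2 * k₁ / Real.sin φ₁) * P_H x * R a₀ * P_H y * R a₂ = 1)
    (hcos : Real.cosh y =
      Real.cosh x * Real.cosh z + Real.sinh x * Real.sinh z * Real.cos (2 * φ₁))
    (L : ℝ) (hL : L = x + y + z) :
    k₁ = Real.sin φ₁ ^ 3 * Real.cosh (L / 2) / Real.sinh (L / 2) :=
  stmt_8_general x y z φ₁ k₁ a₀ a₂ hne hφ hmat hcos L hL
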